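/- Every directed set D of LPOFs over a pointed finitely-preceded dcpo of labels has a supremum, given componentwise: the node set is the union of node sets, the order is the union of orders, the label of a node is the supremum over its labels in members of D containing it, and the formula of a node is the common formula assigned by any member of D containing it. -/

import Mathlib

/-! ## Boolean formulae over node variables -/

inductive Form where
  | top : Form
  | bot : Form
  | conj : Form → Form → Form
  | disj : Form → Form → Form
  | neg : Form → Form
  | var : ℕ → Form

def Form.sat (v : ℕ → Bool) : Form → Prop
  | .top => True
  | .bot => False
  | .conj a b => a.sat v ∧ b.sat v
  | .disj a b => a.sat v ∨ b.sat v
  | .neg a => ¬ a.sat v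
  | .var x => v x = true

def Form.vars : Form → Set ℕ
  | .top => ∅
  | .bot => ∅
  | .conj a b => a.vars ∪ b.vars
  | .disj a b => a.vars ∪ b.vars
  | .neg a => a.vars
  | .var x => {x}

def Form.rename (f : ℕ → ℕ) : Form → Form
  | .top => .top
  | .bot => .bot
  | .conj a b => .conj (a.rename f) (b.rename f)
  | .disj a b => .disj (a.rename f) (b.rename f)
  | .neg a => .neg (a.rename f)
  | .var x => .var (f x)

/-! ## Labels: a pointed, finitely preceded dcpo -/

class LabelDCPO (L : Type) extends PartialOrder L, OrderBot L where
  directedSupExists : ∀ S : Set L, S.Nonempty → DirectedOn (· ≤ ·) S → ∃ b, IsLUB S b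
  finitelyPreceded : ∀ l : L, {l' : L | l' < l}.Finite

/-- The level of a node: length of the longest strict chain ending at it. -/
noncomputable def levOf (lt : ℕ → ℕ → Prop) (x : ℕ) : ℕ :=
  sSup {n | ∃ c : ℕ → ℕ, c n = x ∧ ∀ i < n, lt (c i) (c (i + 1))}

/-! ## Labelled partial orders with formulae -/

structure LPOF (L : Type) [LabelDCPO L] where
  N : Set ℕ
  lt : ℕ → ℕ → Prop
  lab : ℕ → L
  form : ℕ → Form
  lt_mem : ∀ {x y}, lt x y → x ∈ N ∧ y ∈ N
  lt_trans : ∀ {x y z}, lt x y → lt y z → lt x z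
  lt_irrefl : ∀ x, ¬ lt x x
  finPred : ∀ x, {y | lt y x}.Finite
  finLevel : ∀ n, {x ∈ N | levOf lt x = n}.Finite
  singleRoot : ∃! r, r ∈ N ∧ ∀ y, ¬ lt y r
  bot_maximal : ∀ x ∈ N, lab x = ⊥ → ∀ y, ¬ lt x y
  form_sat : ∀ x ∈ N, ∃ v, (form x).sat v
  form_free : ∀ x ∈ N, ∀ y ∈ (form x).vars, lt y x
  form_impl : ∀ {x y}, lt x y → ∀ v, (form y).sat v → (form x).sat v
  lab_junk : ∀ x, x ∉ N → lab x = ⊥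
  form_junk : ∀ x, x ∉ N → form x = Form.top

variable {L : Type} [LabelDCPO L]

/-- The set of ⊥-labelled nodes. -/
def LPOF.Bot (α : LPOF L) : Set ℕ := {x ∈ α.N | α.lab x = ⊥}

/-- Strict successors of a set of nodes. -/
def LPOF.succPlus (α : LPOF L) (X : Set ℕ) : Set ℕ := {y | ∃ x ∈ X, α.lt x y}

/-- Immediate successors of a node. -/
def LPOF.succs (α : LPOF L) (x : ℕ) : Set ℕ :=
  {y | α.lt x y ∧ ¬ ∃ z, α.lt x z ∧ α.lt z y}

/-- The order ⊑ on LPOFs. -/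
def LPOF.le (α β : LPOF L) : Prop :=
  α.N ⊆ β.N ∧
  (∀ x ∈ α.N, ∀ y, β.lt y x → y ∈ α.N) ∧
  (∀ x y, α.lt x y ↔ (β.lt x y ∧ x ∈ α.N ∧ y ∈ α.N)) ∧
  (∀ x ∈ α.N, α.lab x ≤ β.lab x) ∧
  (∀ x ∈ α.N, α.form x = β.form x) ∧
  (∀ x ∈ α.N, α.succs x = β.succs x \ β.succPlus α.Bot)

/-! ## Generic suprema w.r.t. a relation -/

def isUB {X : Type*} (le : X → X → Prop) (D : Set X) (b : X) : Prop :=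
  ∀ a ∈ D, le a b

def isSup {X : Type*} (le : X → X → Prop) (D : Set X) (b : X) : Prop :=
  isUB le D b ∧ ∀ c, isUB le D c → le b c

/-! ## Isomorphism and pomsets with formulae -/

def LPOF.iso (α β : LPOF L) : Prop :=
  ∃ f : ℕ → ℕ, Set.BijOn f α.N β.N ∧
    (∀ x ∈ α.N, ∀ y ∈ α.N, (α.lt x y ↔ β.lt (f x) (f y))) ∧
    (∀ x ∈ α.N, β.lab (f x) = α.lab x) ∧
    (∀ x ∈ α.N, β.form (f x) = (α.form x).rename f)

def isoClass (α : LPOF L) : Set (LPOF L) := {β | α.iso β}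

def Pom (L : Type) [LabelDCPO L] : Type := {A : Set (LPOF L) // ∃ α, A = isoClass α}

def pomLe (A B : Pom L) : Prop := ∀ α ∈ A.1, ∃ β ∈ B.1, LPOF.le α β

def PomFinite (A : Pom L) : Prop := ∀ α ∈ A.1, α.N.Finite

/-! ## The singleton ⊥ LPOF and the bottom pomset -/

def botLPOF (x₀ : ℕ) : LPOF L where
  N := {x₀}
  lt _ _ := False
  lab _ := ⊥
  form _ := Form.top
  lt_mem h := h.elim
  lt_trans h _ := h.elim
  lt_irrefl _ h := h
  finPred _ := Set.finite_empty.subset (by intro y hy; exact hy.elim)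
  finLevel _ := (Set.finite_singleton x₀).subset (fun y hy => hy.1)
  singleRoot := ⟨x₀, ⟨rfl, fun _ h => h⟩, fun r hr => hr.1⟩
  bot_maximal _ _ _ _ h := h
  form_sat _ _ := ⟨fun _ => true, by simp [Form.sat]⟩
  form_free _ _ y hy := by simp [Form.vars] at hy
  form_impl h := h.elim
  lab_junk _ _ := rfl
  form_junk _ _ := rfl

def botPom : Pom L := ⟨isoClass (botLPOF 0), ⟨botLPOF 0, rfl⟩⟩

/-! ## Stuck formulae, extensible nodes, branches (semantically) -/

def stuckSat (α : LPOF L) (v : ℕ → Bool) : Prop :=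
  ∃ x ∈ α.N, α.lab x = ⊥ ∧ (α.form x).sat v

def extens (α : LPOF L) : Set ℕ :=
  {x ∈ α.N | ¬ ∀ v, (α.form x).sat v → stuckSat α v}

def branchSat (α : LPOF L) (S : Set ℕ) (v : ℕ → Bool) : Prop :=
  ∀ x ∈ S, (α.form x).sat v

def IsBranch (α : LPOF L) (S : Set ℕ) : Prop :=
  S.Nonempty ∧ S ⊆ extens α ∧
  (∀ v, branchSat α S v → ¬ stuckSat α v) ∧
  (∀ T, S ⊂ T → T ⊆ extens α → ¬ ∃ v, branchSat α T v)

def brSet (α : LPOF L) : Set ((ℕ → Bool) → Prop) :=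
  {p | ∃ S, IsBranch α S ∧ p = branchSat α S}

/-! ## Truncation (relationally) -/

def IsTrunc (α : LPOF L) (n : ℕ) (β : LPOF L) : Prop :=
  β.N = {x ∈ α.N | levOf α.lt x ≤ n} ∧
  (∀ x y, β.lt x y ↔ (α.lt x y ∧ x ∈ β.N ∧ y ∈ β.N)) ∧
  (∀ x ∈ β.N, (levOf α.lt x < n → β.lab x = α.lab x) ∧
    (levOf α.lt x = n → β.lab x = ⊥)) ∧
  (∀ x ∈ β.N, β.form x = α.form x)

/-! ## Guarded choice (relationally) -/

def IsGuard (x₀ : ℕ) (ℓ : L) (α β γ : LPOF L) : Prop :=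
  γ.N = insert x₀ (α.N ∪ β.N) ∧
  (∀ a b, γ.lt a b ↔ (α.lt a b ∨ β.lt a b ∨ (a = x₀ ∧ b ∈ α.N ∪ β.N))) ∧
  γ.lab x₀ = ℓ ∧
  (∀ y ∈ α.N, γ.lab y = α.lab y) ∧
  (∀ y ∈ β.N, γ.lab y = β.lab y) ∧
  γ.form x₀ = Form.top ∧
  (∀ y ∈ α.N, γ.form y = Form.conj (α.form y) (Form.var x₀)) ∧
  (∀ y ∈ β.N, γ.form y = Form.conj (β.form y) (Form.neg (Form.var x₀)))

def setLe (A B : Set (LPOF L)) : Prop := ∀ α ∈ A, ∃ β ∈ B, LPOF.le α β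

def guardSet (ℓ : L) (A B : Set (LPOF L)) : Set (LPOF L) :=
  {γ | ∃ x₀ α β, α ∈ A ∧ β ∈ B ∧ Disjoint α.N β.N ∧ x₀ ∉ α.N ∧ x₀ ∉ β.N ∧
    IsGuard x₀ ℓ α β γ}

/-! ## Sequential composition (relationally) -/

def CopyFn (α β : LPOF L) (f : Set ℕ → LPOF L) : Prop :=
  ∀ S, IsBranch α S →
    β.iso (f S) ∧ Disjoint (f S).N α.N ∧
    ∀ S', IsBranch α S' → S ≠ S' → Disjoint (f S).N (f S').N

def IsSeq (α β : LPOF L) (f : Set ℕ → LPOF L) (γ : LPOF L) : Prop :=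
  (γ.N = α.N ∪ ⋃ S ∈ {S : Set ℕ | IsBranch α S}, (f S).N) ∧
  (∀ a b, γ.lt a b ↔ (α.lt a b ∨ ∃ S, IsBranch α S ∧
    ((f S).lt a b ∨
      (a ∈ α.N ∧ (∀ v, branchSat α S v → (α.form a).sat v) ∧ b ∈ (f S).N)))) ∧
  (∀ x ∈ α.N, γ.lab x = α.lab x ∧ γ.form x = α.form x) ∧
  (∀ S, IsBranch α S → ∀ x ∈ (f S).N,
    γ.lab x = (f S).lab x ∧
    ∀ v, (γ.form x).sat v ↔ (((f S).form x).sat v ∧ branchSat α S v))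

def seqSet (A B : Set (LPOF L)) : Set (LPOF L) :=
  {γ | ∃ α ∈ A, ∃ β ∈ B, ∃ f, CopyFn α β f ∧ IsSeq α β f γ}

/-! ## Way-below and compactness in Pom(L) -/

def wayBelow (A B : Pom L) : Prop :=
  ∀ D : Set (Pom L), D.Nonempty → DirectedOn pomLe D →
    ∀ S, isSup pomLe D S → pomLe B S → ∃ C ∈ D, pomLe A C

def pomCompact (A : Pom L) : Prop := wayBelow A A



/-!
Directedness makes the componentwise union well defined: two members containing a node agree
on its formula and on the order below it, and the labels of a node form a directed set, which
has a supremum in the dcpo `L`.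

The key property of `⊑`: if `α ⊑ β`, every node of `β` outside `α` lies above a `⊥`-labelled
node of `α` (follow immediate predecessors down to `α` and use the successor clause).
Conversely, the other clauses of `⊑` together with this property imply the successor clause.

The same property gives finite levels. The finitely many nodes of level `< n` all lie in one
member `γ` of `D` which labels such a node `⊥` only if every member does. A node `y` of level
`≤ n` outside `γ` would lie, in a common upper bound `δ` of `γ` and a member containing `y`, above
a node `b` of level `< n` that `γ` labels `⊥`; then `δ` labels `b` by `⊥` too, although `b` has
the successor `y` in `δ`. So level `≤ n` of the union is contained in level `≤ n` of `γ`.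
-/

theorem DirectedOn.exists_mem_forall_of_finite {α ι : Type*} {r : α → α → Prop} {D : Set α}
    (hD : DirectedOn r D) (hne : D.Nonempty) {p : ι → α → Prop}
    (hp : ∀ i a b, r a b → p i a → p i b) {s : Set ι} (hs : s.Finite)
    (hex : ∀ i ∈ s, ∃ a ∈ D, p i a) : ∃ a ∈ D, ∀ i ∈ s, p i a := by
  induction s, hs using Set.Finite.induction_on with
  | empty =>
    obtain ⟨a, ha⟩ := hne
    exact ⟨a, ha, by simp⟩
  | @insert i s _ _ ih =>
    obtain ⟨a, ha, has⟩ := ih fun j hj => hex j (Set.mem_insert_of_mem i hj)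
    obtain ⟨b, hb, hib⟩ := hex i (Set.mem_insert i s)
    obtain ⟨c, hc, hac, hbc⟩ := hD a ha b hb
    exact ⟨c, hc, Set.forall_mem_insert.2
      ⟨hp i b c hbc hib, fun j hj => hp j a c hac (has j hj)⟩⟩

def chainLengths (lt : ℕ → ℕ → Prop) (x : ℕ) : Set ℕ :=
  {n | ∃ c : ℕ → ℕ, c n = x ∧ ∀ i < n, lt (c i) (c (i + 1))}

theorem levOf_eq_sSup (lt : ℕ → ℕ → Prop) (x : ℕ) : levOf lt x = sSup (chainLengths lt x) :=
  rfl

theorem levOf_congr {r s : ℕ → ℕ → Prop} {A : Set ℕ} (hrs : ∀ a b, r a b → s a b)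
    (hsr : ∀ a b, b ∈ A → s a b → a ∈ A ∧ r a b) {x : ℕ} (hx : x ∈ A) :
    levOf s x = levOf r x := by
  rw [levOf_eq_sSup, levOf_eq_sSup]
  congr 1
  ext n
  refine ⟨fun ⟨c, hcx, hc⟩ => ?_, fun ⟨c, hcx, hc⟩ => ⟨c, hcx, fun i hi => hrs _ _ (hc i hi)⟩⟩
  have hA : ∀ i ≤ n, c i ∈ A := fun i hi =>
    Nat.decreasingInduction (motive := fun m _ => c m ∈ A)
      (fun k hk hA => (hsr _ _ hA (hc k hk)).1) (hcx ▸ hx) hi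
  exact ⟨c, hcx, fun i hi => (hsr _ _ (hA (i + 1) hi) (hc i hi)).2⟩

namespace LPOF

def IsRoot (α : LPOF L) (r : ℕ) : Prop := r ∈ α.N ∧ ∀ y, ¬ α.lt y r

section Levels

variable (α : LPOF L)

theorem lt_of_chain {c : ℕ → ℕ} {n : ℕ} (hc : ∀ i < n, α.lt (c i) (c (i + 1))) {i j : ℕ}
    (hij : i < j) (hjn : j ≤ n) : α.lt (c i) (c j) := by
  induction j, hij using Nat.le_induction with
  | base => exact hc i hjn
  | succ j _ ih => exact α.lt_trans (ih (by omega)) (hc j hjn)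

theorem bddAbove_chainLengths (x : ℕ) : BddAbove (chainLengths α.lt x) := by
  refine ⟨(α.finPred x).toFinset.card, fun n ⟨c, hcx, hc⟩ => ?_⟩
  have hmaps : ∀ i ∈ Finset.range n, c i ∈ (α.finPred x).toFinset := fun i hi => by
    simpa [hcx] using α.lt_of_chain hc (Finset.mem_range.1 hi) le_rfl
  have hinj : Set.InjOn c (Finset.range n) := by
    have hne : ∀ {i j}, i < j → j < n → c i ≠ c j := fun hij hj heq => by
      have hlt := α.lt_of_chain hc hij hj.le
      rw [heq] at hlt
      exact α.lt_irrefl _ hlt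
    intro i hi j hj hij
    simp only [Finset.coe_range, Set.mem_Iio] at hi hj
    rcases lt_trichotomy i j with h | h | h
    · exact absurd hij (hne h hj)
    · exact h
    · exact absurd hij.symm (hne h hi)
  simpa using Finset.card_le_card_of_injOn c hmaps hinj

theorem levOf_mem_chainLengths (x : ℕ) : levOf α.lt x ∈ chainLengths α.lt x :=
  Nat.sSup_mem ⟨0, fun _ => x, rfl, fun i hi => absurd hi (Nat.not_lt_zero i)⟩
    (α.bddAbove_chainLengths x)

theorem levOf_lt_levOf {x y : ℕ} (h : α.lt x y) : levOf α.lt x < levOf α.lt y := by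
  obtain ⟨c, hcx, hc⟩ := α.levOf_mem_chainLengths x
  set k := levOf α.lt x
  have hk : k + 1 ∈ chainLengths α.lt y := by
    refine ⟨fun i => if i ≤ k then c i else y, by simp, fun i hi => ?_⟩
    rcases (Nat.lt_succ_iff.1 hi).lt_or_eq with hik | rfl
    · simpa [hik.le, Nat.succ_le_of_lt hik] using hc i hik
    · simpa [hcx] using h
  exact Nat.lt_of_succ_le (le_csSup (α.bddAbove_chainLengths y) hk)

theorem finite_levOf_le (n : ℕ) : {x ∈ α.N | levOf α.lt x ≤ n}.Finite :=
  ((Set.finite_Iic n).biUnion fun k _ => α.finLevel k).subset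
    fun _ hx => Set.mem_biUnion hx.2 ⟨hx.1, rfl⟩

theorem exists_mem_succs {y : ℕ} (h : ∃ x, α.lt x y) : ∃ x, y ∈ α.succs x := by
  obtain ⟨x, hxy, hmax⟩ := (α.finPred y).exists_maximalFor (levOf α.lt) _ h
  refine ⟨x, hxy, fun ⟨z, hxz, hzy⟩ => ?_⟩
  have hlev := α.levOf_lt_levOf hxz
  exact hlev.not_ge (hmax hzy hlev.le)

end Levels

namespace le

variable {α β : LPOF L} {x y : ℕ}

theorem subset (h : α.le β) : α.N ⊆ β.N := h.1

theorem map_lt (h : α.le β) (hxy : α.lt x y) : β.lt x y := ((h.2.2.1 x y).1 hxy).1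

theorem lt_of_mem (h : α.le β) (hxy : β.lt x y) (hy : y ∈ α.N) : α.lt x y :=
  (h.2.2.1 x y).2 ⟨hxy, h.2.1 y hy x hxy, hy⟩

theorem lab_le (h : α.le β) (hx : x ∈ α.N) : α.lab x ≤ β.lab x := h.2.2.2.1 x hx

theorem form_eq (h : α.le β) (hx : x ∈ α.N) : α.form x = β.form x := h.2.2.2.2.1 x hx

theorem isRoot (h : α.le β) (hr : α.IsRoot x) : β.IsRoot x :=
  ⟨h.subset hr.1, fun y hy => hr.2 y (h.lt_of_mem hy hr.1)⟩

theorem exists_bot_lt (h : α.le β) (hy : y ∈ β.N) (hyα : y ∉ α.N) :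
    ∃ b ∈ α.Bot, β.lt b y := by
  induction hk : levOf β.lt y using Nat.strong_induction_on generalizing y with
  | _ k ih =>
  obtain ⟨x, hxy⟩ : ∃ x, y ∈ β.succs x := by
    refine β.exists_mem_succs (by_contra fun hroot => hyα ?_)
    obtain ⟨r, hr, -⟩ := α.singleRoot
    rw [β.singleRoot.unique ⟨hy, not_exists.1 hroot⟩ (h.isRoot hr)]
    exact hr.1
  by_cases hxα : x ∈ α.N
  · have hsuccs : y ∉ β.succs x \ β.succPlus α.Bot :=
      h.2.2.2.2.2 x hxα ▸ fun hy' => hyα (α.lt_mem hy'.1).2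
    by_contra hbot
    exact hsuccs ⟨hxy, hbot⟩
  · obtain ⟨b, hb, hbx⟩ := ih _ (hk ▸ β.levOf_lt_levOf hxy.1) (β.lt_mem hxy.1).1 hxα rfl
    exact ⟨b, hb, β.lt_trans hbx hxy.1⟩

end le

theorem le_of_exists_bot_lt {α β : LPOF L} (hN : α.N ⊆ β.N)
    (hdown : ∀ x ∈ α.N, ∀ y, β.lt y x → y ∈ α.N)
    (hlt : ∀ x y, α.lt x y ↔ β.lt x y ∧ x ∈ α.N ∧ y ∈ α.N)
    (hlab : ∀ x ∈ α.N, α.lab x ≤ β.lab x) (hform : ∀ x ∈ α.N, α.form x = β.form x)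
    (hnew : ∀ y ∈ β.N, y ∉ α.N → ∃ b ∈ α.Bot, β.lt b y) : α.le β := by
  refine ⟨hN, hdown, hlt, hlab, hform, fun x hx => Set.ext fun y => ⟨?_, ?_⟩⟩
  · rintro ⟨hxy, himm⟩
    have hy := (α.lt_mem hxy).2
    refine ⟨⟨((hlt x y).1 hxy).1, fun ⟨z, hxz, hzy⟩ => himm ⟨z, ?_, ?_⟩⟩, fun ⟨b, hb, hby⟩ => ?_⟩
    · exact (hlt x z).2 ⟨hxz, hx, hdown y hy z hzy⟩
    · exact (hlt z y).2 ⟨hzy, hdown y hy z hzy, hy⟩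
    · exact α.bot_maximal b hb.1 hb.2 y ((hlt b y).2 ⟨hby, hb.1, hy⟩)
  · rintro ⟨⟨hxy, himm⟩, hbot⟩
    have hy : y ∈ α.N := by_contra fun hy => hbot (hnew y (β.lt_mem hxy).2 hy)
    exact ⟨(hlt x y).2 ⟨hxy, hx, hy⟩,
      fun ⟨z, hxz, hzy⟩ => himm ⟨z, ((hlt x z).1 hxz).1, ((hlt z y).1 hzy).1⟩⟩

section DirectedSup

variable {D : Set (LPOF L)} {α β : LPOF L} {x y : ℕ}

def supN (D : Set (LPOF L)) : Set ℕ := ⋃ β ∈ D, β.N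

def supLt (D : Set (LPOF L)) (x y : ℕ) : Prop := ∃ β ∈ D, β.lt x y

def labels (D : Set (LPOF L)) (x : ℕ) : Set L := {l | ∃ β ∈ D, x ∈ β.N ∧ β.lab x = l}

open Classical in
noncomputable def supLab (D : Set (LPOF L)) (x : ℕ) : L :=
  if h : ∃ l, IsLUB (labels D x) l then h.choose else ⊥

open Classical in
noncomputable def supForm (D : Set (LPOF L)) (x : ℕ) : Form :=
  if h : ∃ β ∈ D, x ∈ β.N then h.choose.form x else .top

theorem mem_supN : x ∈ supN D ↔ ∃ β ∈ D, x ∈ β.N := by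
  simp [supN]

theorem lt_of_supLt (hdir : DirectedOn LPOF.le D) (hα : α ∈ D) (hx : x ∈ α.N)
    (h : supLt D y x) : α.lt y x := by
  obtain ⟨β, hβ, hyx⟩ := h
  obtain ⟨γ, -, hαγ, hβγ⟩ := hdir α hα β hβ
  exact hαγ.lt_of_mem (hβγ.map_lt hyx) hx

theorem supForm_eq (hdir : DirectedOn LPOF.le D) (hβ : β ∈ D) (hx : x ∈ β.N) :
    supForm D x = β.form x := by
  have hex : ∃ β ∈ D, x ∈ β.N := ⟨β, hβ, hx⟩
  obtain ⟨γ, -, h₁, h₂⟩ := hdir _ hex.choose_spec.1 β hβ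
  rw [supForm, dif_pos hex, h₁.form_eq hex.choose_spec.2, h₂.form_eq hx]

theorem isLUB_supLab (hdir : DirectedOn LPOF.le D) (hx : x ∈ supN D) :
    IsLUB (labels D x) (supLab D x) := by
  obtain ⟨β, hβ, hxβ⟩ := mem_supN.1 hx
  have hex : ∃ l, IsLUB (labels D x) l := by
    refine LabelDCPO.directedSupExists _ ⟨β.lab x, β, hβ, hxβ, rfl⟩ ?_
    rintro _ ⟨β₁, hβ₁, hx₁, rfl⟩ _ ⟨β₂, hβ₂, hx₂, rfl⟩
    obtain ⟨γ, hγ, h₁, h₂⟩ := hdir β₁ hβ₁ β₂ hβ₂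
    exact ⟨γ.lab x, ⟨γ, hγ, h₁.subset hx₁, rfl⟩, h₁.lab_le hx₁, h₂.lab_le hx₂⟩
  rw [supLab, dif_pos hex]
  exact hex.choose_spec

theorem supLab_of_notMem (hx : x ∉ supN D) : supLab D x = ⊥ := by
  have hempty : labels D x = ∅ := Set.eq_empty_of_forall_notMem
    fun _ ⟨β, hβ, hxβ, _⟩ => hx (mem_supN.2 ⟨β, hβ, hxβ⟩)
  unfold supLab
  split_ifs with h
  · exact (isLUB_empty_iff.1 (hempty ▸ h.choose_spec)).eq_bot
  · rfl

theorem lab_le_supLab (hdir : DirectedOn LPOF.le D) (hβ : β ∈ D) (hx : x ∈ β.N) :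
    β.lab x ≤ supLab D x :=
  (isLUB_supLab hdir (mem_supN.2 ⟨β, hβ, hx⟩)).1 ⟨β, hβ, hx, rfl⟩

theorem supLab_eq_bot_iff (hdir : DirectedOn LPOF.le D) (hx : x ∈ supN D) :
    supLab D x = ⊥ ↔ ∀ β ∈ D, x ∈ β.N → β.lab x = ⊥ :=
  ⟨fun h _ hβ hxβ => le_bot_iff.1 (h ▸ lab_le_supLab hdir hβ hxβ), fun h =>
    le_bot_iff.1 ((isLUB_supLab hdir hx).2 fun _ ⟨β, hβ, hxβ, hl⟩ => hl ▸ (h β hβ hxβ).le)⟩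

theorem levOf_supLt (hdir : DirectedOn LPOF.le D) (hα : α ∈ D) (hx : x ∈ α.N) :
    levOf (supLt D) x = levOf α.lt x :=
  levOf_congr (fun _ _ h => ⟨α, hα, h⟩)
    (fun _ _ hb h => have h' := lt_of_supLt hdir hα hb h; ⟨(α.lt_mem h').1, h'⟩) hx

theorem existsUnique_supRoot (hne : D.Nonempty) (hdir : DirectedOn LPOF.le D) :
    ∃! r, r ∈ supN D ∧ ∀ y, ¬ supLt D y r := by
  obtain ⟨α, hα⟩ := hne
  obtain ⟨r, hr, -⟩ := α.singleRoot
  refine ⟨r, ⟨mem_supN.2 ⟨α, hα, hr.1⟩, fun y ⟨β, hβ, hyr⟩ => ?_⟩, fun r' ⟨hr'N, hr'⟩ => ?_⟩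
  · obtain ⟨γ, -, hαγ, hβγ⟩ := hdir α hα β hβ
    exact (hαγ.isRoot hr).2 y (hβγ.map_lt hyr)
  · obtain ⟨β, hβ, hr'β⟩ := mem_supN.1 hr'N
    obtain ⟨γ, -, hαγ, hβγ⟩ := hdir α hα β hβ
    exact γ.singleRoot.unique (hβγ.isRoot ⟨hr'β, fun y h => hr' y ⟨β, hβ, h⟩⟩) (hαγ.isRoot hr)

theorem exists_mem_forall_lab_eq_bot_imp (hne : D.Nonempty) (hdir : DirectedOn LPOF.le D)
    {P : Set ℕ} (hP : P.Finite) (hPN : P ⊆ supN D) :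
    ∃ γ ∈ D, ∀ z ∈ P, z ∈ γ.N ∧ (γ.lab z = ⊥ → supLab D z = ⊥) := by
  refine hdir.exists_mem_forall_of_finite hne ?_ hP fun z hz => ?_
  · rintro z γ γ' hγγ' ⟨hz, hbot⟩
    exact ⟨hγγ'.subset hz, fun h => hbot (le_bot_iff.1 (h ▸ hγγ'.lab_le hz))⟩
  · obtain ⟨β, hβ, hzβ⟩ := mem_supN.1 (hPN hz)
    by_cases h : ∀ γ ∈ D, z ∈ γ.N → γ.lab z = ⊥
    · exact ⟨β, hβ, hzβ, fun _ => (supLab_eq_bot_iff hdir (hPN hz)).2 h⟩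
    · push Not at h
      obtain ⟨γ, hγ, hzγ, hγz⟩ := h
      exact ⟨γ, hγ, hzγ, fun h => absurd h hγz⟩

theorem finite_levOf_supLt_lt (hne : D.Nonempty) (hdir : DirectedOn LPOF.le D) (n : ℕ) :
    {x ∈ supN D | levOf (supLt D) x < n}.Finite := by
  induction n with
  | zero => simp
  | succ n ih =>
    obtain ⟨γ, hγ, hsettled⟩ := exists_mem_forall_lab_eq_bot_imp hne hdir ih fun _ hz => hz.1
    refine (γ.finite_levOf_le n).subset ?_
    rintro y ⟨hy, hlev⟩
    obtain ⟨β, hβ, hyβ⟩ := mem_supN.1 hy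
    obtain ⟨δ, hδ, hγδ, hβδ⟩ := hdir γ hγ β hβ
    have hyγ : y ∈ γ.N := by
      by_contra hyγ
      obtain ⟨b, hb, hby⟩ := hγδ.exists_bot_lt (hβδ.subset hyβ) hyγ
      have hbδ := hγδ.subset hb.1
      have hbN : b ∈ supN D := mem_supN.2 ⟨γ, hγ, hb.1⟩
      have hlevb : levOf (supLt D) b < n := by
        rw [levOf_supLt hdir hδ (hβδ.subset hyβ)] at hlev
        rw [levOf_supLt hdir hδ hbδ]
        have := δ.levOf_lt_levOf hby
        omega
      have hbot := (hsettled b ⟨hbN, hlevb⟩).2 hb.2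
      exact δ.bot_maximal b hbδ ((supLab_eq_bot_iff hdir hbN).1 hbot δ hδ hbδ) y hby
    refine ⟨hyγ, ?_⟩
    rw [← levOf_supLt hdir hγ hyγ]
    omega

noncomputable def dirSup (D : Set (LPOF L)) (hne : D.Nonempty) (hdir : DirectedOn LPOF.le D) :
    LPOF L where
  N := supN D
  lt := supLt D
  lab := supLab D
  form := supForm D
  lt_mem := fun ⟨β, hβ, h⟩ =>
    ⟨mem_supN.2 ⟨β, hβ, (β.lt_mem h).1⟩, mem_supN.2 ⟨β, hβ, (β.lt_mem h).2⟩⟩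
  lt_trans := by
    rintro x y z ⟨β₁, hβ₁, h₁⟩ ⟨β₂, hβ₂, h₂⟩
    obtain ⟨γ, hγ, h₁γ, h₂γ⟩ := hdir β₁ hβ₁ β₂ hβ₂
    exact ⟨γ, hγ, γ.lt_trans (h₁γ.map_lt h₁) (h₂γ.map_lt h₂)⟩
  lt_irrefl x := fun ⟨β, _, h⟩ => β.lt_irrefl x h
  finPred x := by
    by_cases hx : x ∈ supN D
    · obtain ⟨α, hα, hxα⟩ := mem_supN.1 hx
      exact (α.finPred x).subset fun y => lt_of_supLt hdir hα hxα
    · exact Set.finite_empty.subset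
        fun y ⟨β, hβ, h⟩ => hx (mem_supN.2 ⟨β, hβ, (β.lt_mem h).2⟩)
  finLevel n := (finite_levOf_supLt_lt hne hdir (n + 1)).subset
    fun _ ⟨hx, hlev⟩ => ⟨hx, by omega⟩
  singleRoot := existsUnique_supRoot hne hdir
  bot_maximal x hx hbot y := fun ⟨β, hβ, h⟩ =>
    β.bot_maximal x (β.lt_mem h).1
      ((supLab_eq_bot_iff hdir hx).1 hbot β hβ (β.lt_mem h).1) y h
  form_sat x hx := by
    obtain ⟨β, hβ, hxβ⟩ := mem_supN.1 hx
    rw [supForm_eq hdir hβ hxβ]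
    exact β.form_sat x hxβ
  form_free x hx y hy := by
    obtain ⟨β, hβ, hxβ⟩ := mem_supN.1 hx
    rw [supForm_eq hdir hβ hxβ] at hy
    exact ⟨β, hβ, β.form_free x hxβ y hy⟩
  form_impl := by
    rintro x y ⟨β, hβ, hxy⟩ v hv
    rw [supForm_eq hdir hβ (β.lt_mem hxy).2] at hv
    rw [supForm_eq hdir hβ (β.lt_mem hxy).1]
    exact β.form_impl hxy v hv
  lab_junk _ hx := supLab_of_notMem hx
  form_junk _ hx := dif_neg (mt mem_supN.2 hx)

variable {hne : D.Nonempty} {hdir : DirectedOn LPOF.le D}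

theorem le_dirSup (hα : α ∈ D) : α.le (dirSup D hne hdir) := by
  refine le_of_exists_bot_lt (fun x hx => mem_supN.2 ⟨α, hα, hx⟩)
    (fun x hx y hyx => (α.lt_mem (lt_of_supLt hdir hα hx hyx)).1)
    (fun x y => ⟨fun h => ⟨⟨α, hα, h⟩, α.lt_mem h⟩, fun ⟨h, _, hy⟩ => lt_of_supLt hdir hα hy h⟩)
    (fun x hx => lab_le_supLab hdir hα hx) (fun x hx => (supForm_eq hdir hα hx).symm) ?_
  intro y hy hyα
  obtain ⟨β, hβ, hyβ⟩ := mem_supN.1 hy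
  obtain ⟨γ, hγ, hαγ, hβγ⟩ := hdir α hα β hβ
  obtain ⟨b, hb, hby⟩ := hαγ.exists_bot_lt (hβγ.subset hyβ) hyα
  exact ⟨b, hb, γ, hγ, hby⟩

theorem exists_bot_lt_of_isUB {c : LPOF L} (hc : isUB LPOF.le D c) (hy : y ∈ c.N)
    (hyD : y ∉ supN D) : ∃ b ∈ (dirSup D hne hdir).Bot, c.lt b y := by
  obtain ⟨γ, hγ, hsettled⟩ := exists_mem_forall_lab_eq_bot_imp hne hdir
    (P := {z ∈ supN D | c.lt z y}) ((c.finPred y).subset fun _ hz => hz.2) fun _ hz => hz.1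
  obtain ⟨b, hb, hby⟩ := (hc γ hγ).exists_bot_lt hy fun h => hyD (mem_supN.2 ⟨γ, hγ, h⟩)
  have hbN : b ∈ supN D := mem_supN.2 ⟨γ, hγ, hb.1⟩
  exact ⟨b, ⟨hbN, (hsettled b ⟨hbN, hby⟩).2 hb.2⟩, hby⟩

theorem dirSup_le {c : LPOF L} (hc : isUB LPOF.le D c) : (dirSup D hne hdir).le c := by
  refine le_of_exists_bot_lt ?_ ?_ ?_ ?_ ?_ fun y hy hyD => exists_bot_lt_of_isUB hc hy hyD
  · intro x hx
    obtain ⟨β, hβ, hxβ⟩ := mem_supN.1 hx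
    exact (hc β hβ).subset hxβ
  · intro x hx y hyx
    obtain ⟨β, hβ, hxβ⟩ := mem_supN.1 hx
    exact mem_supN.2 ⟨β, hβ, (β.lt_mem ((hc β hβ).lt_of_mem hyx hxβ)).1⟩
  · refine fun x y => ⟨fun h => ?_, fun ⟨h, hx, hy⟩ => ?_⟩
    · obtain ⟨β, hβ, hxy⟩ := h
      exact ⟨(hc β hβ).map_lt hxy, (dirSup D hne hdir).lt_mem ⟨β, hβ, hxy⟩⟩
    · obtain ⟨β₁, hβ₁, hx₁⟩ := mem_supN.1 hx
      obtain ⟨β₂, hβ₂, hy₂⟩ := mem_supN.1 hy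
      obtain ⟨γ, hγ, h₁, h₂⟩ := hdir β₁ hβ₁ β₂ hβ₂
      exact ⟨γ, hγ, (hc γ hγ).lt_of_mem h (h₂.subset hy₂)⟩
  · intro x hx
    exact (isLUB_supLab hdir hx).2 fun _ ⟨β, hβ, hxβ, hl⟩ => hl ▸ (hc β hβ).lab_le hxβ
  · intro x hx
    obtain ⟨β, hβ, hxβ⟩ := mem_supN.1 hx
    exact (supForm_eq hdir hβ hxβ).trans ((hc β hβ).form_eq hxβ)

end DirectedSup

end LPOF

/-- every nonempty directed set of LPOFs has a supremum, computed
componentwise. -/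
theorem stmt3 {L : Type} [LabelDCPO L] (D : Set (LPOF L))
    (hne : D.Nonempty) (hdir : DirectedOn LPOF.le D) :
    ∃ γ : LPOF L,
      isSup LPOF.le D γ ∧
      (γ.N = ⋃ β ∈ D, β.N) ∧
      (∀ x y, γ.lt x y ↔ ∃ β ∈ D, β.lt x y) ∧
      (∀ x ∈ γ.N, IsLUB {l : L | ∃ β ∈ D, x ∈ β.N ∧ β.lab x = l} (γ.lab x)) ∧
      (∀ β ∈ D, ∀ x ∈ β.N, γ.form x = β.form x) := by
  refine ⟨LPOF.dirSup D hne hdir, ⟨fun _ hα => LPOF.le_dirSup hα, fun _ hc => LPOF.dirSup_le hc⟩,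
    rfl, fun _ _ => Iff.rfl, fun _ hx => LPOF.isLUB_supLab hdir hx,
    fun _ hβ _ hx => LPOF.supForm_eq hdir hβ hx⟩
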